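/- Let G be a DAG on d nodes with binary adjacency matrix B, and suppose h(B) := Tr(e^{B ∘ B}) - d where ∘ denotes the Hadamard (element-wise) product. Then h(B) = 0 if and only if the graph with adjacency matrix B is acyclic, and h(B) ≥ 0 for all real matrices B. -/

import Mathlib

open Matrix

/-- A directed cycle in the graph with edge relation `r` on `Fin d`: a closed walk of
positive length. -/
def HasDirCycle {d : ℕ} (r : Fin d → Fin d → Prop) : Prop :=
  ∃ (k : ℕ) (v : ℕ → Fin d), 0 < k ∧ v 0 = v k ∧ ∀ i < k, r (v i) (v (i + 1))

/-- Powers of an entrywise-nonnegative matrix are entrywise nonnegative. -/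
lemma pow_entry_nonneg {d : ℕ} {A : Matrix (Fin d) (Fin d) ℝ}
    (hA : ∀ i j, 0 ≤ A i j) : ∀ (k : ℕ) (i j : Fin d), 0 ≤ (A ^ k) i j := by
  intro k
  induction k with
  | zero => intro i j; by_cases h : i = j <;> simp [pow_zero, Matrix.one_apply, h]
  | succ k ih =>
      intro i j
      rw [pow_succ, Matrix.mul_apply]
      exact Finset.sum_nonneg fun m _ => mul_nonneg (ih i m) (hA m j)

lemma walk_pow_pos {d : ℕ} {A : Matrix (Fin d) (Fin d) ℝ}
    (hA : ∀ i j, 0 ≤ A i j) :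
    ∀ (k : ℕ) (v : ℕ → Fin d), (∀ t < k, 0 < A (v t) (v (t + 1))) →
      0 < (A ^ k) (v 0) (v k) := by
  intro k
  induction k with
  | zero => intro v _; simp [pow_zero, Matrix.one_apply]
  | succ k ih =>
      intro v hv
      have h1 : 0 < (A ^ k) (v 0) (v k) := ih v fun t ht => hv t (Nat.lt_succ_of_lt ht)
      have h2 : 0 < A (v k) (v (k + 1)) := hv k (Nat.lt_succ_self k)
      rw [pow_succ, Matrix.mul_apply]
      have hle : (A ^ k) (v 0) (v k) * A (v k) (v (k + 1)) ≤
          ∑ m, (A ^ k) (v 0) m * A m (v (k + 1)) :=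
        Finset.single_le_sum (f := fun m => (A ^ k) (v 0) m * A m (v (k + 1)))
          (fun m _ => mul_nonneg (pow_entry_nonneg hA k _ _) (hA _ _))
          (Finset.mem_univ (v k))
      exact lt_of_lt_of_le (mul_pos h1 h2) hle

lemma pow_ne_zero_walk {d : ℕ} {A : Matrix (Fin d) (Fin d) ℝ} :
    ∀ (k : ℕ) (i j : Fin d), (A ^ k) i j ≠ 0 →
      ∃ v : ℕ → Fin d, v 0 = i ∧ v k = j ∧ ∀ t < k, A (v t) (v (t + 1)) ≠ 0 := by
  intro k
  induction k with
  | zero =>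
      intro i j h
      rw [pow_zero] at h
      have hij : i = j := by
        by_contra hne
        simp [Matrix.one_apply, hne] at h
      exact ⟨fun _ => i, rfl, hij ▸ rfl, fun t ht => absurd ht (Nat.not_lt_zero t)⟩
  | succ k ih =>
      intro i j h
      rw [pow_succ', Matrix.mul_apply] at h
      obtain ⟨m, _, hm⟩ := Finset.exists_ne_zero_of_sum_ne_zero h
      have hAm : A i m ≠ 0 := fun h0 => hm (by rw [h0, zero_mul])
      have hpow : (A ^ k) m j ≠ 0 := fun h0 => hm (by rw [h0, mul_zero])
      obtain ⟨w, hw0, hwk, hwe⟩ := ih m j hpow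
      refine ⟨fun t => if t = 0 then i else w (t - 1), rfl, by simp [hwk], ?_⟩
      intro t ht
      rcases Nat.eq_zero_or_pos t with rfl | htp
      · simpa [hw0] using hAm
      · have ht' : t - 1 < k := by omega
        have h1 : t ≠ 0 := by omega
        have h2 : t - 1 + 1 = t := by omega
        simpa [h1, h2] using hwe (t - 1) ht'

/-- For `h(B) := Tr (e^{B ∘ B}) - d` (Hadamard square), `h(B) = 0` iff the directed graph
with an edge `i → j` whenever `B i j ≠ 0` is acyclic, and `h(B) ≥ 0` for all real `B`. -/
theorem notears_constraint_characterization (d : ℕ) :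
    ∀ B : Matrix (Fin d) (Fin d) ℝ,
      ((NormedSpace.exp (Matrix.hadamard B B)).trace - d = 0 ↔
        ¬ HasDirCycle (fun i j => B i j ≠ 0)) ∧
      0 ≤ (NormedSpace.exp (Matrix.hadamard B B)).trace - d := by
  intro B
  set A := Matrix.hadamard B B with hAdef
  have hA : ∀ i j, 0 ≤ A i j := fun i j => by
    simp only [hAdef, Matrix.hadamard_apply]; exact mul_self_nonneg _
  letI : SeminormedRing (Matrix (Fin d) (Fin d) ℝ) := Matrix.linftyOpSemiNormedRing
  letI : NormedRing (Matrix (Fin d) (Fin d) ℝ) := Matrix.linftyOpNormedRing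
  letI : NormedAlgebra ℝ (Matrix (Fin d) (Fin d) ℝ) := Matrix.linftyOpNormedAlgebra
  have hS : HasSum (fun n : ℕ => ((n.factorial : ℝ)⁻¹) • A ^ n) (NormedSpace.exp A) :=
    NormedSpace.exp_series_hasSum_exp' (𝕂 := ℝ) A
  set g : ℕ → ℝ := fun n => ((n.factorial : ℝ)⁻¹) * (A ^ n).trace with hg
  have htr : HasSum g ((NormedSpace.exp A).trace) := by
    have h1 := hasSum_sum (s := (Finset.univ : Finset (Fin d)))
      (fun i _ => (Pi.hasSum.mp hS.matrix_diag) i)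
    simpa [hg, Matrix.trace, Matrix.diag, Finset.mul_sum] using h1
  have hsumm : Summable g := htr.summable
  have h0 : g 0 = d := by simp [hg, Matrix.trace_one]
  have hkey : (NormedSpace.exp A).trace - d = ∑' n, g (n + 1) := by
    rw [← htr.tsum_eq, hsumm.tsum_eq_zero_add, h0]; ring
  have htrnn : ∀ n : ℕ, 0 ≤ (A ^ n).trace := fun n => by
    rw [Matrix.trace]
    exact Finset.sum_nonneg fun i _ => pow_entry_nonneg hA n i i
  have hnn : ∀ n : ℕ, 0 ≤ g (n + 1) := fun n =>
    mul_nonneg (inv_nonneg.mpr (Nat.cast_nonneg _)) (htrnn _)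
  have hsumm' : Summable (fun n => g (n + 1)) :=
    (summable_nat_add_iff 1).mpr hsumm
  constructor
  · rw [hkey]
    constructor
    · -- tsum = 0 → no cycle
      intro hz hcyc
      obtain ⟨k, v, hk, hv, hedges⟩ := hcyc
      have hApos : ∀ t < k, 0 < A (v t) (v (t + 1)) := fun t ht => by
        simp only [hAdef, Matrix.hadamard_apply]
        exact mul_self_pos.mpr (hedges t ht)
      have hwalk : 0 < (A ^ k) (v 0) (v k) := walk_pow_pos hA k v hApos
      have htrpos : 0 < (A ^ k).trace := by
        rw [Matrix.trace]
        have := Finset.single_le_sum (f := fun i => (A ^ k).diag i)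
          (fun i _ => pow_entry_nonneg hA k i i) (Finset.mem_univ (v 0))
        have h2 : 0 < (A ^ k) (v 0) (v 0) := by rw (occs := .pos [2]) [hv]; exact hwalk
        exact lt_of_lt_of_le h2 this
      have hgk : 0 < g k := mul_pos (inv_pos.mpr (by exact_mod_cast Nat.factorial_pos k)) htrpos
      obtain ⟨k', rfl⟩ : ∃ k', k = k' + 1 := ⟨k - 1, by omega⟩
      have hle : g (k' + 1) ≤ ∑' n, g (n + 1) := hsumm'.le_tsum k' (fun j _ => hnn j)
      linarith
    · -- no cycle → tsum = 0
      intro hnc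
      have hzero : ∀ n : ℕ, g (n + 1) = 0 := by
        intro n
        by_contra hne
        have htrne : (A ^ (n + 1)).trace ≠ 0 := fun h => hne (by simp [hg, h])
        rw [Matrix.trace] at htrne
        obtain ⟨i, _, hi⟩ := Finset.exists_ne_zero_of_sum_ne_zero htrne
        obtain ⟨v, hv0, hvk, hve⟩ := pow_ne_zero_walk (n + 1) i i hi
        exact hnc ⟨n + 1, v, Nat.succ_pos n, by rw [hv0, hvk], fun t ht => by
          have := hve t ht
          simp only [hAdef, Matrix.hadamard_apply] at this
          exact fun h => this (by rw [h, mul_zero])⟩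
      simp [tsum_congr hzero]
  · rw [hkey]
    exact tsum_nonneg hnn
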